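/- arXiv:2409.14790 — 6 statements merged into one kernel-verified Lean document; each statement's English description precedes it below -/
import Mathlib

section
/- Let x ∈ ℂ^n with Nx ≠ 0. The closure of the image {qf_x(μ) : μ ∈ ℂ, μ ≠ rq_{M,N}(x)} of the quotient function equals the closed disc {z ∈ ℂ : |z − rq_{M,N}(x)| ≤ r₀(x)} of radius r₀(x) centred at rq_{M,N}(x). -/
/-!
Write `ρ = rq x`, `v = N x` and `u = M x - ρ v`. Then `u` is `P`-orthogonal to `v` and
`(M - μ N) x = u + (ρ - μ) v`, so Pythagoras gives `‖(M - μ N) x‖ / ‖v‖ = √(r₀² + t²)` with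
`t = |ρ - μ|`, and `qf x μ = ρ + e^{iθ} (√(r₀² + t²) - t)` where `ρ - μ = t e^{iθ}`.
As `t` runs through `(0, ∞)` the radius `√(r₀² + t²) - t` decreases from `r₀` to `0`, so the
image of `qf x` is the punctured open disc (or the centre alone if `r₀ = 0`), whose closure is
the closed disc.
-/

open Matrix Filter Topology
open scoped ComplexOrder

noncomputable def innerP {n : ℕ} (P : Matrix (Fin n) (Fin n) ℂ) (x y : Fin n → ℂ) : ℂ :=
  star y ⬝ᵥ P.mulVec x

noncomputable def normP {n : ℕ} (P : Matrix (Fin n) (Fin n) ℂ) (x : Fin n → ℂ) : ℝ :=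
  Real.sqrt (innerP P x x).re

noncomputable def rq {n : ℕ} (M N P : Matrix (Fin n) (Fin n) ℂ) (x : Fin n → ℂ) : ℂ :=
  innerP P (M.mulVec x) (N.mulVec x) / innerP P (N.mulVec x) (N.mulVec x)

noncomputable def r0 {n : ℕ} (M N P : Matrix (Fin n) (Fin n) ℂ) (x : Fin n → ℂ) : ℝ :=
  normP P (M.mulVec x - rq M N P x • N.mulVec x) / normP P (N.mulVec x)

noncomputable def qf {n : ℕ} (M N P : Matrix (Fin n) (Fin n) ℂ) (x : Fin n → ℂ) (μ : ℂ) : ℂ :=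
  (innerP P ((M - μ • N).mulVec x) (N.mulVec x) /
      (‖innerP P ((M - μ • N).mulVec x) (N.mulVec x)‖ : ℂ)) *
    ((normP P ((M - μ • N).mulVec x) / normP P (N.mulVec x) : ℝ) : ℂ) + μ

def genSpec {n : ℕ} (M N : Matrix (Fin n) (Fin n) ℂ) : Set ℂ :=
  {l : ℂ | (M - l • N).det = 0}

open Metric

theorem closure_eq_closedBall_of_ball_sdiff_subset {E : Type*} [NormedAddCommGroup E]
    [NormedSpace ℝ E] [Nontrivial E] {S : Set E} {c : E} {r : ℝ} (hS : S.Nonempty)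
    (hball : ball c r \ {c} ⊆ S) (hsub : S ⊆ closedBall c r) :
    closure S = closedBall c r := by
  rcases eq_or_ne r 0 with rfl | hr
  · rw [closedBall_zero] at hsub ⊢
    rw [hS.subset_singleton_iff.mp hsub, closure_singleton]
  refine (closure_minimal hsub isClosed_closedBall).antisymm ?_
  rw [← closure_ball c hr]
  refine closure_minimal ?_ isClosed_closure
  calc ball c r ⊆ closure (ball c r ∩ {c}ᶜ) :=
        (dense_compl_singleton c).open_subset_closure_inter isOpen_ball
    _ ⊆ closure S := closure_mono hball

noncomputable def radialDiscMap (r : ℝ) (w : ℂ) : ℂ :=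
  w / (‖w‖ : ℂ) * ((√(r ^ 2 + ‖w‖ ^ 2) - ‖w‖ : ℝ) : ℂ)

lemma norm_radialDiscMap {w : ℂ} (hw : w ≠ 0) (r : ℝ) :
    ‖radialDiscMap r w‖ = √(r ^ 2 + ‖w‖ ^ 2) - ‖w‖ := by
  have hle : ‖w‖ ≤ √(r ^ 2 + ‖w‖ ^ 2) :=
    Real.le_sqrt_of_sq_le (le_add_of_nonneg_left (sq_nonneg r))
  rw [radialDiscMap, norm_mul, norm_div, Complex.norm_real, Complex.norm_real, norm_norm,
    div_self (norm_ne_zero_iff.mpr hw), one_mul, Real.norm_of_nonneg (sub_nonneg.mpr hle)]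

lemma norm_radialDiscMap_le {r : ℝ} (hr : 0 ≤ r) (w : ℂ) : ‖radialDiscMap r w‖ ≤ r := by
  rcases eq_or_ne w 0 with rfl | hw
  · simpa [radialDiscMap] using hr
  rw [norm_radialDiscMap hw, sub_le_iff_le_add]
  exact Real.sqrt_le_iff.mpr ⟨by positivity, by nlinarith [norm_nonneg w]⟩

lemma exists_radialDiscMap_eq {r : ℝ} {z : ℂ} (hz : z ≠ 0) (hzr : ‖z‖ < r) :
    ∃ w ≠ 0, radialDiscMap r w = z := by
  set s := ‖z‖
  have hs : 0 < s := norm_pos_iff.mpr hz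
  -- `t = ‖w‖` must solve `√(r² + t²) - t = s`
  set t := (r ^ 2 - s ^ 2) / (2 * s)
  have ht : 0 < t := div_pos (by nlinarith) (by positivity)
  have hw : ((t / s : ℝ) : ℂ) * z ≠ 0 :=
    mul_ne_zero (Complex.ofReal_ne_zero.mpr (div_pos ht hs).ne') hz
  have hnorm : ‖((t / s : ℝ) : ℂ) * z‖ = t := by
    rw [norm_mul, Complex.norm_real, Real.norm_of_nonneg (div_pos ht hs).le,
      div_mul_cancel₀ _ hs.ne']
  have hts : 2 * t * s = r ^ 2 - s ^ 2 := by
    simp only [t]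
    field_simp
  have hsqrt : √(r ^ 2 + t ^ 2) = t + s := by
    rw [show r ^ 2 + t ^ 2 = (t + s) ^ 2 by linear_combination -hts]
    exact Real.sqrt_sq (by positivity)
  refine ⟨_, hw, ?_⟩
  rw [radialDiscMap, hnorm, hsqrt, add_sub_cancel_left]
  have hsC : (s : ℂ) ≠ 0 := Complex.ofReal_ne_zero.mpr hs.ne'
  have htC : (t : ℂ) ≠ 0 := Complex.ofReal_ne_zero.mpr ht.ne'
  push_cast
  field_simp

section InnerP

variable {n : ℕ} {P : Matrix (Fin n) (Fin n) ℂ}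

lemma innerP_add_left (a b y : Fin n → ℂ) :
    innerP P (a + b) y = innerP P a y + innerP P b y := by
  simp only [innerP, mulVec_add, dotProduct_add]

lemma innerP_sub_left (a b y : Fin n → ℂ) :
    innerP P (a - b) y = innerP P a y - innerP P b y := by
  simp only [innerP, mulVec_sub, dotProduct_sub]

lemma innerP_smul_left (c : ℂ) (a y : Fin n → ℂ) :
    innerP P (c • a) y = c * innerP P a y := by
  simp only [innerP, mulVec_smul, dotProduct_smul, smul_eq_mul]

lemma innerP_add_right (a b y : Fin n → ℂ) :
    innerP P y (a + b) = innerP P y a + innerP P y b := by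
  simp only [innerP, star_add, add_dotProduct]

lemma innerP_smul_right (c : ℂ) (a y : Fin n → ℂ) :
    innerP P y (c • a) = star c * innerP P y a := by
  simp only [innerP, star_smul, smul_dotProduct, smul_eq_mul]

lemma innerP_eq_star_innerP (hP : P.IsHermitian) (a b : Fin n → ℂ) :
    innerP P a b = star (innerP P b a) := by
  rw [innerP, innerP, star_dotProduct, star_mulVec, hP.eq, ← dotProduct_mulVec]

lemma innerP_self_eq_normP_sq (hP : P.PosSemidef) (a : Fin n → ℂ) :
    innerP P a a = ((normP P a ^ 2 : ℝ) : ℂ) := by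
  have h := Complex.nonneg_iff.mp (hP.dotProduct_mulVec_nonneg a)
  apply Complex.ext
  · exact (Real.sq_sqrt h.1).symm
  · rw [Complex.ofReal_im]
    exact h.2.symm

lemma normP_nonneg (a : Fin n → ℂ) : 0 ≤ normP P a :=
  Real.sqrt_nonneg _

lemma normP_pos (hP : P.PosDef) {v : Fin n → ℂ} (hv : v ≠ 0) : 0 < normP P v :=
  Real.sqrt_pos.mpr (Complex.pos_iff.mp (hP.dotProduct_mulVec_pos hv)).1

lemma normP_add_smul_sq_of_innerP_eq_zero (hP : P.PosSemidef) {u v : Fin n → ℂ}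
    (huv : innerP P u v = 0) (c : ℂ) :
    normP P (u + c • v) ^ 2 = normP P u ^ 2 + ‖c‖ ^ 2 * normP P v ^ 2 := by
  have hvu : innerP P v u = 0 := by
    rw [innerP_eq_star_innerP hP.isHermitian, huv, star_zero]
  have hcc : c * star c = ((‖c‖ ^ 2 : ℝ) : ℂ) := by
    rw [Complex.star_def, Complex.mul_conj, Complex.sq_norm]
  have h : innerP P (u + c • v) (u + c • v) =
      ((normP P u ^ 2 + ‖c‖ ^ 2 * normP P v ^ 2 : ℝ) : ℂ) := by
    simp only [innerP_add_left, innerP_add_right, innerP_smul_left, innerP_smul_right, huv,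
      hvu, mul_zero, add_zero, zero_add]
    rw [innerP_self_eq_normP_sq hP u, innerP_self_eq_normP_sq hP v]
    push_cast at hcc ⊢
    linear_combination ((normP P v : ℂ) ^ 2) * hcc
  exact_mod_cast (innerP_self_eq_normP_sq hP _).symm.trans h

end InnerP

section QuotientFunction

variable {n : ℕ} {M N P : Matrix (Fin n) (Fin n) ℂ} {x : Fin n → ℂ}

lemma r0_nonneg : 0 ≤ r0 M N P x :=
  div_nonneg (normP_nonneg _) (normP_nonneg _)

lemma innerP_mulVec_eq_rq_mul (hP : P.PosDef) (hx : N *ᵥ x ≠ 0) :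
    innerP P (M *ᵥ x) (N *ᵥ x) = rq M N P x * ((normP P (N *ᵥ x) ^ 2 : ℝ) : ℂ) := by
  have hv : ((normP P (N *ᵥ x) ^ 2 : ℝ) : ℂ) ≠ 0 := by
    exact_mod_cast (pow_pos (normP_pos hP hx) 2).ne'
  rw [rq, innerP_self_eq_normP_sq hP.posSemidef, div_mul_cancel₀ _ hv]

lemma innerP_residual_eq_zero (hP : P.PosDef) (hx : N *ᵥ x ≠ 0) :
    innerP P (M *ᵥ x - rq M N P x • N *ᵥ x) (N *ᵥ x) = 0 := by
  rw [innerP_sub_left, innerP_smul_left, innerP_mulVec_eq_rq_mul hP hx,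
    innerP_self_eq_normP_sq hP.posSemidef, sub_self]

lemma sub_smul_mulVec_eq_residual_add (μ : ℂ) :
    (M - μ • N) *ᵥ x = (M *ᵥ x - rq M N P x • N *ᵥ x) + (rq M N P x - μ) • N *ᵥ x := by
  rw [sub_mulVec, smul_mulVec, sub_smul]
  abel

lemma innerP_sub_smul_mulVec (hP : P.PosDef) (hx : N *ᵥ x ≠ 0) (μ : ℂ) :
    innerP P ((M - μ • N) *ᵥ x) (N *ᵥ x) =
      (rq M N P x - μ) * ((normP P (N *ᵥ x) ^ 2 : ℝ) : ℂ) := by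
  rw [sub_smul_mulVec_eq_residual_add, innerP_add_left, innerP_residual_eq_zero hP hx,
    innerP_smul_left, innerP_self_eq_normP_sq hP.posSemidef, zero_add]

lemma normP_sub_smul_mulVec_div (hP : P.PosDef) (hx : N *ᵥ x ≠ 0) (μ : ℂ) :
    normP P ((M - μ • N) *ᵥ x) / normP P (N *ᵥ x) =
      √(r0 M N P x ^ 2 + ‖rq M N P x - μ‖ ^ 2) := by
  have hv := normP_pos hP hx
  have hsq := normP_add_smul_sq_of_innerP_eq_zero hP.posSemidef
    (innerP_residual_eq_zero (M := M) hP hx) (rq M N P x - μ)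
  rw [← sub_smul_mulVec_eq_residual_add] at hsq
  rw [← Real.sqrt_sq (div_nonneg (normP_nonneg _) hv.le)]
  congr 1
  rw [r0, div_pow, div_pow]
  field_simp
  linear_combination hsq

-- This holds at `μ = rq` too, where both sides reduce to `μ` through `0 / 0 = 0`.
lemma qf_eq_rq_add_radialDiscMap (hP : P.PosDef) (hx : N *ᵥ x ≠ 0) (μ : ℂ) :
    qf M N P x μ = rq M N P x + radialDiscMap (r0 M N P x) (rq M N P x - μ) := by
  set w := rq M N P x - μ
  have hv : 0 < normP P (N *ᵥ x) ^ 2 := pow_pos (normP_pos hP hx) 2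
  have hnorm : (‖w * ((normP P (N *ᵥ x) ^ 2 : ℝ) : ℂ)‖ : ℂ) =
      (‖w‖ : ℂ) * ((normP P (N *ᵥ x) ^ 2 : ℝ) : ℂ) := by
    rw [norm_mul, Complex.norm_real, Real.norm_of_nonneg hv.le, Complex.ofReal_mul]
  have hw : w / (‖w‖ : ℂ) * (‖w‖ : ℂ) = w := by
    rcases eq_or_ne w 0 with h | h
    · rw [h, zero_div, zero_mul]
    · exact div_mul_cancel₀ _ (Complex.ofReal_ne_zero.mpr (norm_ne_zero_iff.mpr h))
  rw [qf, innerP_sub_smul_mulVec hP hx, normP_sub_smul_mulVec_div hP hx, hnorm,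
    mul_div_mul_right _ _ (Complex.ofReal_ne_zero.mpr hv.ne'), radialDiscMap,
    Complex.ofReal_sub, mul_sub, hw]
  ring

end QuotientFunction

theorem stmt_1_general {n : ℕ} (M N P : Matrix (Fin n) (Fin n) ℂ)
    (hP : P.PosDef) (x : Fin n → ℂ) (hx : N.mulVec x ≠ 0) :
    closure {z : ℂ | ∃ μ : ℂ, μ ≠ rq M N P x ∧ qf M N P x μ = z} =
      Metric.closedBall (rq M N P x) (r0 M N P x) := by
  have hqf := qf_eq_rq_add_radialDiscMap (M := M) hP hx
  apply closure_eq_closedBall_of_ball_sdiff_subset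
  · exact ⟨_, rq M N P x + 1, by simp, rfl⟩
  · rintro z ⟨hz, hzρ⟩
    obtain ⟨w, hw, hwz⟩ :=
      exists_radialDiscMap_eq (sub_ne_zero.mpr hzρ) (by rwa [← dist_eq_norm, ← mem_ball])
    refine ⟨rq M N P x - w, by simpa using hw, ?_⟩
    rw [hqf, sub_sub_cancel, hwz, add_sub_cancel]
  · rintro _ ⟨μ, -, rfl⟩
    rw [mem_closedBall, hqf, dist_self_add_left]
    exact norm_radialDiscMap_le r0_nonneg _

/-- the closure of the image of the quotient function is the closed disc
of radius `r0 x` centred at the Rayleigh quotient. -/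
theorem stmt_1 {n : ℕ} (hn : 1 ≤ n) (M N P : Matrix (Fin n) (Fin n) ℂ)
    (hP : P.PosDef) (x : Fin n → ℂ) (hx : N.mulVec x ≠ 0) :
    closure {z : ℂ | ∃ μ : ℂ, μ ≠ rq M N P x ∧ qf M N P x μ = z} =
      Metric.closedBall (rq M N P x) (r0 M N P x) :=
  stmt_1_general M N P hP x hx
end

section
/- Assume the eigenvalue problem Mx = λNx is normal with respect to ⟨·,·⟩_P and that Λ(M,N) is nonempty. Then for every x ∈ ℂ^n with Nx ≠ 0 there exists an eigenvalue λ ∈ Λ(M,N) with |λ − rq_{M,N}(x)| ≤ r₀(x); that is, the closed disc of radius r₀(x) centred at rq_{M,N}(x) (the closure of the image of the quotient function) contains an eigenvalue. -/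
/-!
Put `S = M - μ₀ N`, `A = M S⁻¹` and `y = S x`. Then `M x = A y`, `N x = q(A) y` with
`q = μ₀⁻¹ (X - 1)`, and the residual is `M x - ρ N x = p(A) y` with `p = X - ρ q`. Factor
`P = Qᴴ Q`; then `‖z‖_P = ‖Q z‖` and `Q A Q⁻¹` is normal for the Euclidean inner product, so `Q y`
splits into orthogonal eigenvectors `v_α` and `‖r(A) y‖_P² = ∑ |r(α)|² ‖v_α‖²` for every
polynomial `r`. A ratio of two such sums is bounded below by one of its termwise ratios, which
gives an eigenvalue `α` of `A` with `|p(α) / q(α)| ≤ r₀(x)`. Finally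
`p(α) / q(α) = μ₀ α / (α - 1) - ρ`, and `μ₀ α / (α - 1)` lies in `Λ(M, N)`.
-/

open Matrix Filter Topology
open scoped ComplexOrder

open Polynomial Module.End
open scoped ComplexStarModule

theorem Finset.exists_div_le_sum_div_sum {ι 𝕜 : Type*} [Field 𝕜] [LinearOrder 𝕜]
    [IsStrictOrderedRing 𝕜] {s : Finset ι} {a b : ι → 𝕜}
    (ha : ∀ i ∈ s, 0 ≤ a i) (hb : ∀ i ∈ s, 0 ≤ b i) (hsum : 0 < ∑ i ∈ s, b i) :
    ∃ i ∈ s, 0 < b i ∧ a i / b i ≤ (∑ i ∈ s, a i) / ∑ i ∈ s, b i := by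
  classical
  set R := (∑ i ∈ s, a i) / ∑ i ∈ s, b i
  set t := s.filter fun i => 0 < b i
  have hbt : ∑ i ∈ t, b i = ∑ i ∈ s, b i :=
    Finset.sum_filter_of_ne fun i hi hne => lt_of_le_of_ne (hb i hi) hne.symm
  have hle : ∑ i ∈ t, a i ≤ ∑ i ∈ t, R * b i := by
    rw [← Finset.mul_sum, hbt, div_mul_cancel₀ _ hsum.ne']
    exact Finset.sum_le_sum_of_subset_of_nonneg (Finset.filter_subset _ _) fun i hi _ => ha i hi
  have ht : t.Nonempty := Finset.nonempty_of_sum_ne_zero (hbt ▸ hsum.ne')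
  obtain ⟨i, hit, hi⟩ := Finset.exists_le_of_sum_le ht hle
  obtain ⟨his, hbi⟩ := Finset.mem_filter.mp hit
  exact ⟨i, his, hbi, (div_le_iff₀ hbi).mpr hi⟩

theorem Module.End.aeval_apply_of_mem_eigenspace {R M : Type*} [CommRing R] [AddCommGroup M]
    [Module R M] {f : Module.End R M} {μ : R} {x : M} (hx : x ∈ f.eigenspace μ) (p : R[X]) :
    aeval f p x = p.eval μ • x := by
  rcases eq_or_ne x 0 with rfl | hx0
  · simp
  · exact Module.End.aeval_apply_of_hasEigenvector ⟨hx, hx0⟩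

section NormalOperator

variable {E : Type*} [NormedAddCommGroup E] [InnerProductSpace ℂ E] [FiniteDimensional ℂ E]

namespace LinearMap

-- The order of the infimum matches `IsSymmetric.orthogonalFamily_eigenspace_inf_eigenspace`.
noncomputable abbrev reImEigenspace (T : E →ₗ[ℂ] E) (i : ℂ × ℂ) : Submodule ℂ E :=
  eigenspace (ℑ T : E →ₗ[ℂ] E) i.2 ⊓ eigenspace (ℜ T : E →ₗ[ℂ] E) i.1

theorem mem_eigenspace_of_mem_reImEigenspace (T : E →ₗ[ℂ] E) {i : ℂ × ℂ} {v : E}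
    (hv : v ∈ reImEigenspace T i) : v ∈ eigenspace T (i.1 + Complex.I * i.2) := by
  obtain ⟨him, hre⟩ := Submodule.mem_inf.mp hv
  rw [mem_eigenspace_iff] at him hre ⊢
  conv_lhs => rw [← realPart_add_I_smul_imaginaryPart T]
  rw [LinearMap.add_apply, LinearMap.smul_apply, hre, him, smul_smul, add_smul]

theorem orthogonalFamily_reImEigenspace (T : E →ₗ[ℂ] E) :
    OrthogonalFamily ℂ (fun i => reImEigenspace T i) fun i => (reImEigenspace T i).subtypeₗᵢ :=
  LinearMap.IsSymmetric.orthogonalFamily_eigenspace_inf_eigenspace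
    ((LinearMap.isSymmetric_iff_isSelfAdjoint _).mpr (ℑ T).2)
    ((LinearMap.isSymmetric_iff_isSelfAdjoint _).mpr (ℜ T).2)

theorem directSum_isInternal_reImEigenspace (T : E →ₗ[ℂ] E) [IsStarNormal T] :
    DirectSum.IsInternal fun i => reImEigenspace T i :=
  LinearMap.IsSymmetric.directSum_isInternal_of_commute
    ((LinearMap.isSymmetric_iff_isSelfAdjoint _).mpr (ℑ T).2)
    ((LinearMap.isSymmetric_iff_isSelfAdjoint _).mpr (ℜ T).2)
    (Commute.realPart_imaginaryPart T).symm

end LinearMap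

namespace IsStarNormal

open LinearMap in
theorem exists_hasEigenvalue_norm_eval_div_le (T : E →ₗ[ℂ] E) [IsStarNormal T] (p q : ℂ[X])
    (w : E) (hq : aeval T q w ≠ 0) :
    ∃ α, HasEigenvalue T α ∧ q.eval α ≠ 0 ∧
      ‖p.eval α / q.eval α‖ ≤ ‖aeval T p w‖ / ‖aeval T q w‖ := by
  classical
  obtain ⟨d, rfl⟩ := (directSum_isInternal_reImEigenspace T).surjective w
  set ev : ℂ × ℂ → ℂ := fun i => i.1 + Complex.I * i.2
  have happly (r : ℂ[X]) : aeval T r (DirectSum.coeAddMonoidHom (reImEigenspace T) d) =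
      ∑ i ∈ d.support, (reImEigenspace T i).subtypeₗᵢ (r.eval (ev i) • d i) := by
    rw [DirectSum.coeAddMonoidHom_eq_dfinsuppSum, DFinsupp.sum, map_sum]
    refine Finset.sum_congr rfl fun i _ => ?_
    exact Module.End.aeval_apply_of_mem_eigenspace
      (mem_eigenspace_of_mem_reImEigenspace T (d i).2) r
  have hnorm (r : ℂ[X]) : ‖aeval T r (DirectSum.coeAddMonoidHom (reImEigenspace T) d)‖ ^ 2 =
      ∑ i ∈ d.support, ‖r.eval (ev i)‖ ^ 2 * ‖d i‖ ^ 2 := by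
    rw [happly, (orthogonalFamily_reImEigenspace T).norm_sum]
    simp only [norm_smul, mul_pow]
  obtain ⟨i, -, hbi, hi⟩ := Finset.exists_div_le_sum_div_sum
    (a := fun i => ‖p.eval (ev i)‖ ^ 2 * ‖d i‖ ^ 2) (b := fun i => ‖q.eval (ev i)‖ ^ 2 * ‖d i‖ ^ 2)
    (fun i _ => by positivity) (fun i _ => by positivity) (by rw [← hnorm]; positivity)
  rw [← hnorm, ← hnorm, ← div_pow] at hi
  have hqi : q.eval (ev i) ≠ 0 := fun h => by simp [h] at hbi
  have hdi : d i ≠ 0 := fun h => by simp [h] at hbi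
  refine ⟨ev i, hasEigenvalue_of_hasEigenvector
    ⟨mem_eigenspace_of_mem_reImEigenspace T (d i).2, Submodule.coe_eq_zero.not.mpr hdi⟩, hqi, ?_⟩
  rw [mul_div_mul_right _ _ (by simpa using hdi), ← div_pow, ← norm_div] at hi
  exact (pow_le_pow_iff_left₀ (norm_nonneg _) (by positivity) two_ne_zero).mp hi

end IsStarNormal

end NormalOperator

namespace Matrix

variable {ι : Type*} [Fintype ι] [DecidableEq ι]

theorem isStarNormal_mul_mul_inv {R : Type*} [CommRing R] [StarRing R] {A P Q : Matrix ι ι R}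
    (hQ : IsUnit Q) (hQP : Qᴴ * Q = P) (hA : A * (P⁻¹ * Aᴴ * P) = P⁻¹ * Aᴴ * P * A) :
    IsStarNormal (Q * A * Q⁻¹) := by
  have hQdet := (isUnit_iff_isUnit_det Q).mp hQ
  rw [← hQP] at hA
  rw [isStarNormal_iff, commute_iff_eq, star_eq_conjTranspose]
  have key := congrArg (fun X => Q * X * Q⁻¹) hA
  simp only [Matrix.mul_inv_rev, conjTranspose_mul, conjTranspose_nonsing_inv,
    Matrix.mul_assoc] at key ⊢
  simpa only [mul_nonsing_inv_cancel_left _ _ hQdet, mul_nonsing_inv _ hQdet,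
    Matrix.mul_one] using key.symm

instance isStarNormal_toEuclideanLin {𝕜 : Type*} [RCLike 𝕜] (A : Matrix ι ι 𝕜) [IsStarNormal A] :
    IsStarNormal (toEuclideanLin A) :=
  IsStarNormal.map (LinearMap.toMatrixOrthonormal (EuclideanSpace.basisFun ι 𝕜)).symm A

theorem toEuclideanLin_mul_mul_inv_toLp {𝕜 : Type*} [RCLike 𝕜] {A Q : Matrix ι ι 𝕜} (hQ : IsUnit Q)
    (z : ι → 𝕜) :
    toEuclideanLin (Q * A * Q⁻¹) (WithLp.toLp 2 (Q *ᵥ z)) = WithLp.toLp 2 (Q *ᵥ (A *ᵥ z)) := by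
  rw [toLpLin_toLp, toLin'_apply, mulVec_mulVec, mulVec_mulVec, Matrix.mul_assoc,
    nonsing_inv_mul _ ((isUnit_iff_isUnit_det Q).mp hQ), Matrix.mul_one]

theorem aeval_toEuclideanLin_mul_mul_inv_toLp {𝕜 : Type*} [RCLike 𝕜] {A Q : Matrix ι ι 𝕜}
    (hQ : IsUnit Q) (r : 𝕜[X]) (z : ι → 𝕜) :
    aeval (toEuclideanLin (Q * A * Q⁻¹)) r (WithLp.toLp 2 (Q *ᵥ z)) =
      WithLp.toLp 2 (Q *ᵥ (aeval A r *ᵥ z)) := by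
  induction r using Polynomial.induction_on generalizing z with
  | C a =>
    rw [aeval_C, aeval_C, Module.algebraMap_end_apply, Algebra.algebraMap_eq_smul_one, smul_mulVec,
      one_mulVec, mulVec_smul, WithLp.toLp_smul]
  | add p q hp hq =>
    rw [map_add, map_add, LinearMap.add_apply, hp, hq, add_mulVec, mulVec_add, WithLp.toLp_add]
  | monomial k a ih =>
    rw [pow_succ, ← mul_assoc, aeval_mul, aeval_X, Module.End.mul_apply,
      toEuclideanLin_mul_mul_inv_toLp hQ, ih, map_mul (aeval A) (C a * X ^ k) X, aeval_X,
      mulVec_mulVec z]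

theorem PosDef.exists_isUnit_conjTranspose_mul_self {𝕜 : Type*} [RCLike 𝕜] {P : Matrix ι ι 𝕜}
    (hP : P.PosDef) : ∃ Q : Matrix ι ι 𝕜, IsUnit Q ∧ Qᴴ * Q = P := by
  open scoped MatrixOrder in
  obtain ⟨Q, hQ⟩ := CStarAlgebra.nonneg_iff_eq_star_mul_self.mp hP.posSemidef.nonneg
  refine ⟨Q, ?_, hQ.symm⟩
  rw [isUnit_iff_isUnit_det]
  have hdet : (Qᴴ * Q).det ≠ 0 := hQ ▸ hP.det_pos.ne'
  exact isUnit_iff_ne_zero.mpr (right_ne_zero_of_mul (det_mul Qᴴ Q ▸ hdet))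

theorem exists_mulVec_eq_smul_of_hasEigenvalue_conj {𝕜 : Type*} [RCLike 𝕜] {A Q : Matrix ι ι 𝕜}
    (hQ : IsUnit Q) {α : 𝕜}
    (h : Module.End.HasEigenvalue (toEuclideanLin (Q * A * Q⁻¹)) α) :
    ∃ v ≠ 0, A *ᵥ v = α • v := by
  obtain ⟨u, hu⟩ := h.exists_hasEigenvector
  have hQdet := (isUnit_iff_isUnit_det Q).mp hQ
  have hBu : (Q * A * Q⁻¹) *ᵥ u.ofLp = α • u.ofLp := by
    simpa only [toLpLin_apply, WithLp.ofLp_smul] using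
      congrArg WithLp.ofLp (Module.End.mem_eigenspace_iff.mp hu.1)
  refine ⟨Q⁻¹ *ᵥ u.ofLp, fun h0 => hu.2 ?_, ?_⟩
  · simpa [mulVec_mulVec, mul_nonsing_inv _ hQdet] using congrArg (Q *ᵥ ·) h0
  · rw [← mulVec_smul, ← hBu, mulVec_mulVec, mulVec_mulVec, ← Matrix.mul_assoc, ← Matrix.mul_assoc,
      nonsing_inv_mul _ hQdet, Matrix.one_mul]

theorem det_sub_smul_eq_zero_of_mulVec_eq_smul {K : Type*} [Field K] {M N : Matrix ι ι K} {μ₀ α : K}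
    (hμ₀ : μ₀ ≠ 0) (hS : IsUnit (M - μ₀ • N)) (hα : α ≠ 1) {v : ι → K} (hv : v ≠ 0)
    (hAv : (M * (M - μ₀ • N)⁻¹) *ᵥ v = α • v) :
    (M - (μ₀ * α / (α - 1)) • N).det = 0 := by
  set S := M - μ₀ • N
  have hSdet := (isUnit_iff_isUnit_det S).mp hS
  set y := S⁻¹ *ᵥ v
  have hSy : S *ᵥ y = v := by simp [y, mulVec_mulVec, mul_nonsing_inv _ hSdet]
  have hMy : M *ᵥ y = α • v := by rw [← hAv, mulVec_mulVec]
  have hNy : N *ᵥ y = (μ₀⁻¹ * (α - 1)) • v := by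
    have : μ₀ • (N *ᵥ y) = M *ᵥ y - S *ᵥ y := by simp [S, sub_mulVec, smul_mulVec]
    rw [hMy, hSy] at this
    rw [mul_smul, sub_smul, one_smul, ← this, smul_smul, inv_mul_cancel₀ hμ₀, one_smul]
  refine exists_mulVec_eq_zero_iff.mp ⟨y, fun h0 => hv ?_, ?_⟩
  · rw [← hSy, h0, mulVec_zero]
  · rw [sub_mulVec, smul_mulVec, hMy, hNy, smul_smul, ← sub_smul]
    have hα' : α - 1 ≠ 0 := sub_ne_zero.mpr hα
    rw [show α - μ₀ * α / (α - 1) * (μ₀⁻¹ * (α - 1)) = 0 by field_simp; ring, zero_smul]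

end Matrix

theorem normP_eq_norm_toLp {n : ℕ} {P Q : Matrix (Fin n) (Fin n) ℂ} (hQP : Qᴴ * Q = P)
    (z : Fin n → ℂ) : normP P z = ‖WithLp.toLp 2 (Q *ᵥ z)‖ := by
  rw [normP, innerP, ← hQP, ← mulVec_mulVec, dotProduct_mulVec, ← star_mulVec, dotProduct_comm,
    ← EuclideanSpace.inner_toLp_toLp, norm_eq_sqrt_re_inner (𝕜 := ℂ), RCLike.re_to_complex]

theorem exists_eigenvalue_norm_eval_div_le_normP {n : ℕ} {A P : Matrix (Fin n) (Fin n) ℂ}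
    (hP : P.PosDef) (hA : A * (P⁻¹ * Aᴴ * P) = P⁻¹ * Aᴴ * P * A) (p q : ℂ[X]) (y : Fin n → ℂ)
    (hq : aeval A q *ᵥ y ≠ 0) :
    ∃ α, (∃ v ≠ 0, A *ᵥ v = α • v) ∧ q.eval α ≠ 0 ∧
      ‖p.eval α / q.eval α‖ ≤ normP P (aeval A p *ᵥ y) / normP P (aeval A q *ᵥ y) := by
  obtain ⟨Q, hQ, hQP⟩ := hP.exists_isUnit_conjTranspose_mul_self
  have := isStarNormal_mul_mul_inv hQ hQP hA
  have hq' : aeval (toEuclideanLin (Q * A * Q⁻¹)) q (WithLp.toLp 2 (Q *ᵥ y)) ≠ 0 := by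
    rwa [aeval_toEuclideanLin_mul_mul_inv_toLp hQ, Ne, WithLp.toLp_eq_zero, ← mulVec_zero Q,
      (mulVec_injective_iff_isUnit.mpr hQ).eq_iff]
  obtain ⟨α, hα, hqα, hle⟩ := IsStarNormal.exists_hasEigenvalue_norm_eval_div_le _ p q _ hq'
  refine ⟨α, exists_mulVec_eq_smul_of_hasEigenvalue_conj hQ hα, hqα, ?_⟩
  rwa [normP_eq_norm_toLp hQP, normP_eq_norm_toLp hQP, ← aeval_toEuclideanLin_mul_mul_inv_toLp hQ,
    ← aeval_toEuclideanLin_mul_mul_inv_toLp hQ]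

theorem stmt_6_general {n : ℕ} (M N P : Matrix (Fin n) (Fin n) ℂ)
    (hP : P.PosDef)
    (hnormal : ∃ μ₀ : ℂ, μ₀ ≠ 0 ∧ IsUnit (M - μ₀ • N) ∧
      (M * (M - μ₀ • N)⁻¹) * (P⁻¹ * (M * (M - μ₀ • N)⁻¹)ᴴ * P) =
        (P⁻¹ * (M * (M - μ₀ • N)⁻¹)ᴴ * P) * (M * (M - μ₀ • N)⁻¹))
    (x : Fin n → ℂ) (hx : N.mulVec x ≠ 0) :
    ∃ l ∈ genSpec M N, ‖l - rq M N P x‖ ≤ r0 M N P x := by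
  obtain ⟨μ₀, hμ₀, hS, hcomm⟩ := hnormal
  set A := M * (M - μ₀ • N)⁻¹
  set ρ := rq M N P x
  set q : ℂ[X] := C μ₀⁻¹ * (X - 1)
  have hAS : A * (M - μ₀ • N) = M :=
    nonsing_inv_mul_cancel_right _ _ ((isUnit_iff_isUnit_det _).mp hS)
  have hq : aeval A q * (M - μ₀ • N) = N := by
    simp only [q, map_mul, map_sub, aeval_C, aeval_X, map_one, Algebra.algebraMap_eq_smul_one,
      Matrix.smul_mul, Matrix.one_mul, Matrix.sub_mul, hAS]
    rw [sub_sub_cancel, smul_smul, inv_mul_cancel₀ hμ₀, one_smul]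
  have hp : aeval A (X - C ρ * q) * (M - μ₀ • N) = M - ρ • N := by
    simp only [map_sub, map_mul, aeval_X, aeval_C, Algebra.algebraMap_eq_smul_one, Matrix.sub_mul,
      Matrix.smul_mul, Matrix.one_mul, hq, hAS]
  obtain ⟨α, ⟨v, hv, hAv⟩, hqα, hle⟩ := exists_eigenvalue_norm_eval_div_le_normP hP hcomm
    (X - C ρ * q) q ((M - μ₀ • N) *ᵥ x) (by rwa [mulVec_mulVec, hq])
  have hα1 : α ≠ 1 := by
    rintro rfl; simp [q] at hqα
  refine ⟨μ₀ * α / (α - 1), det_sub_smul_eq_zero_of_mulVec_eq_smul hμ₀ hS hα1 hv hAv, ?_⟩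
  rw [mulVec_mulVec, mulVec_mulVec, hp, hq, sub_mulVec, smul_mulVec] at hle
  rw [r0]
  convert hle using 2
  have : α - 1 ≠ 0 := sub_ne_zero.mpr hα1
  simp only [q, eval_sub, eval_mul, eval_C, eval_X, eval_one]
  field_simp

/-- in normal eigenvalue problems the closed disc of radius `r0 x` centred
at the Rayleigh quotient contains an eigenvalue. -/
theorem stmt_6 {n : ℕ} (hn : 1 ≤ n) (M N P : Matrix (Fin n) (Fin n) ℂ)
    (hP : P.PosDef)
    (hnormal : ∃ μ₀ : ℂ, μ₀ ≠ 0 ∧ IsUnit (M - μ₀ • N) ∧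
      (M * (M - μ₀ • N)⁻¹) * (P⁻¹ * (M * (M - μ₀ • N)⁻¹)ᴴ * P) =
        (P⁻¹ * (M * (M - μ₀ • N)⁻¹)ᴴ * P) * (M * (M - μ₀ • N)⁻¹))
    (hspec : (genSpec M N).Nonempty)
    (x : Fin n → ℂ) (hx : N.mulVec x ≠ 0) :
    ∃ l ∈ genSpec M N, ‖l - rq M N P x‖ ≤ r0 M N P x :=
  stmt_6_general M N P hP hnormal x hx
end

section
/- Assume the pencil (M,N) is self-adjoint with respect to P and that N is invertible, so that every element of Λ(M,N) is real; let λ₁ = min Λ(M,N) and λₙ = max Λ(M,N). Let x ∈ ℂ^n, x ≠ 0, and let μ ∈ ℝ satisfy μ > rq_{M,N}(x) and |λ₁ − μ| ≥ |λₙ − μ|. Then |λ₁ − qf_x(μ)| ≤ |λ₁ − rq_{M,N}(x)|, with equality if and only if x is an eigenvector of the pencil (Mx = λNx for some λ). -/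
open Matrix Filter Topology
open scoped ComplexOrder

/-!
Factor `P = Sᴴ * S` and pass to Euclidean space: with `w = S N x` and `u = S M x = B w`, where
`B = S M N⁻¹ S⁻¹` is Hermitian with spectrum in `Λ(M, N) ∩ ℝ ⊆ [λ₁, λₙ]`, the Rayleigh quotient
is `ρ = ⟪w, u⟫ / ‖w‖²`, and since `⟪w, u - μ w⟫ = (ρ - μ) ‖w‖² < 0` the quotient function is
`μ - ‖u - μ w‖ / ‖w‖`. As `u - ρ w ⟂ w`, Pythagoras gives
`‖u - μ w‖² = ‖u - ρ w‖² + (μ - ρ)² ‖w‖²`, and positivity of `(B - λ₁)(λₙ - B)` bounds the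
relative residual `r = ‖u - ρ w‖ / ‖w‖` by `r² ≤ (ρ - λ₁)(λₙ - ρ)`. What remains is an
inequality between real numbers, strict exactly when `r ≠ 0`, i.e. when `x` is not an
eigenvector.
-/

open scoped InnerProductSpace

theorem abs_sub_sub_le_abs_sub_of_sq_eq {a b ρ μ r s : ℝ} (hab : a ≤ b)
    (hr : r ^ 2 ≤ (ρ - a) * (b - ρ)) (hs : 0 ≤ s) (hs2 : s ^ 2 = (μ - ρ) ^ 2 + r ^ 2)
    (hμ : ρ < μ) (hd : |b - μ| ≤ |a - μ|) :
    |a - (μ - s)| ≤ |a - ρ| ∧ (|a - (μ - s)| = |a - ρ| ↔ r = 0) := by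
  have haρ : a ≤ ρ := by
    by_contra! h
    nlinarith [sq_nonneg r]
  rcases eq_or_ne r 0 with rfl | hr0
  · have : s = μ - ρ := by nlinarith
    simp [this]
  · have hr2 := sq_pos_of_ne_zero hr0
    have hbμ : b - μ ≤ μ - a := by
      rw [abs_of_nonpos (by linarith : a - μ ≤ 0)] at hd
      linarith [le_abs_self (b - μ)]
    have hρa : a < ρ := by
      rcases haρ.lt_or_eq with h | rfl
      · exact h
      · nlinarith
    have hbρ : b - ρ < 4 * (μ - a) := by linarith
    have hs_lo : μ - ρ < s := by nlinarith
    have hs_hi : s < μ + ρ - 2 * a := by nlinarith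
    have hlt : |a - (μ - s)| < |a - ρ| := by
      rw [abs_of_nonpos (by linarith : a - ρ ≤ 0), abs_lt]
      constructor <;> linarith
    exact ⟨hlt.le, iff_of_false hlt.ne hr0⟩

section RayleighQuotient

variable {E : Type*} [NormedAddCommGroup E] [InnerProductSpace ℂ E] {u w : E} {ρ : ℝ}

theorem inner_self_eq_norm_sq_complex (w : E) : ⟪w, w⟫_ℂ = (‖w‖ ^ 2 : ℝ) := by
  rw [inner_self_eq_norm_sq_to_K, RCLike.ofReal_eq_complex_ofReal, Complex.ofReal_pow]

theorem exists_inner_eq_mul_norm_sq (h : (⟪w, u⟫_ℂ).im = 0) (hw : w ≠ 0) :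
    ∃ ρ : ℝ, ⟪w, u⟫_ℂ = ρ * ‖w‖ ^ 2 := by
  have hw2 : (‖w‖ : ℂ) ^ 2 ≠ 0 := by simpa using hw
  refine ⟨(⟪w, u⟫_ℂ).re / ‖w‖ ^ 2, ?_⟩
  rw [Complex.ofReal_div, Complex.ofReal_pow, div_mul_cancel₀ _ hw2]
  exact (Complex.ext (Complex.ofReal_re _) (by rw [Complex.ofReal_im, h])).symm

theorem inner_sub_smul_of_inner_eq (h : ⟪w, u⟫_ℂ = ρ * ‖w‖ ^ 2) (μ : ℝ) :
    ⟪w, u - (μ : ℂ) • w⟫_ℂ = ((ρ - μ) * ‖w‖ ^ 2 : ℝ) := by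
  rw [inner_sub_right, inner_smul_right, h, inner_self_eq_norm_sq_complex]
  push_cast
  ring

theorem norm_sub_smul_sq_of_inner_eq (h : ⟪w, u⟫_ℂ = ρ * ‖w‖ ^ 2) (μ : ℝ) :
    ‖u - (μ : ℂ) • w‖ ^ 2 = ‖u - (ρ : ℂ) • w‖ ^ 2 + (μ - ρ) ^ 2 * ‖w‖ ^ 2 := by
  have horth : ⟪u - (ρ : ℂ) • w, ((ρ - μ : ℝ) : ℂ) • w⟫_ℂ = 0 := by
    rw [inner_smul_right, ← inner_conj_symm, inner_sub_smul_of_inner_eq h ρ]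
    simp
  have hsplit : u - (μ : ℂ) • w = (u - (ρ : ℂ) • w) + ((ρ - μ : ℝ) : ℂ) • w := by
    push_cast
    rw [sub_smul]
    abel
  rw [hsplit, sq, norm_add_sq_eq_norm_sq_add_norm_sq_of_inner_eq_zero _ _ horth, norm_smul,
    Complex.norm_real, Real.norm_eq_abs]
  nlinarith [sq_abs (ρ - μ)]

theorem norm_sub_smul_sq_le_of_re_inner_nonneg (h : ⟪w, u⟫_ℂ = ρ * ‖w‖ ^ 2) {a b : ℝ}
    (hab : 0 ≤ (⟪u - (a : ℂ) • w, (b : ℂ) • w - u⟫_ℂ).re) :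
    ‖u - (ρ : ℂ) • w‖ ^ 2 ≤ (ρ - a) * (b - ρ) * ‖w‖ ^ 2 := by
  set v := u - (ρ : ℂ) • w
  have hwv : ⟪w, v⟫_ℂ = 0 := by
    have := inner_sub_smul_of_inner_eq h ρ
    rwa [sub_self, zero_mul, Complex.ofReal_zero] at this
  have hvw : ⟪v, w⟫_ℂ = 0 := by rw [← inner_conj_symm, hwv, map_zero]
  have h1 : u - (a : ℂ) • w = v + ((ρ - a : ℝ) : ℂ) • w := by
    simp only [v, Complex.ofReal_sub, sub_smul]; abel
  have h2 : (b : ℂ) • w - u = ((b - ρ : ℝ) : ℂ) • w - v := by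
    simp only [v, Complex.ofReal_sub, sub_smul]; abel
  simp only [h1, h2, inner_add_left, inner_sub_right, inner_smul_right, inner_smul_left, hwv,
    hvw, inner_self_eq_norm_sq_complex, Complex.conj_ofReal, mul_zero] at hab
  norm_cast at hab
  nlinarith

theorem exists_eq_smul_iff_of_inner_eq (h : ⟪w, u⟫_ℂ = ρ * ‖w‖ ^ 2) (hw : w ≠ 0) :
    (∃ l : ℂ, u = l • w) ↔ u = (ρ : ℂ) • w := by
  refine ⟨?_, fun hu => ⟨ρ, hu⟩⟩
  rintro ⟨l, rfl⟩
  have hw2 : (‖w‖ : ℂ) ^ 2 ≠ 0 := by simpa using hw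
  rw [inner_smul_right, inner_self_eq_norm_sq_complex, Complex.ofReal_pow] at h
  rw [mul_right_cancel₀ hw2 h]

theorem abs_sub_sub_norm_div_le (h : ⟪w, u⟫_ℂ = ρ * ‖w‖ ^ 2) (hw : w ≠ 0) {a b μ : ℝ}
    (hab : a ≤ b) (hspec : 0 ≤ (⟪u - (a : ℂ) • w, (b : ℂ) • w - u⟫_ℂ).re) (hμ : ρ < μ)
    (hd : |b - μ| ≤ |a - μ|) :
    |a - (μ - ‖u - (μ : ℂ) • w‖ / ‖w‖)| ≤ |a - ρ| ∧
      (|a - (μ - ‖u - (μ : ℂ) • w‖ / ‖w‖)| = |a - ρ| ↔ ∃ l : ℂ, u = l • w) := by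
  have hw0 : 0 < ‖w‖ := norm_pos_iff.mpr hw
  have hr : (‖u - (ρ : ℂ) • w‖ / ‖w‖) ^ 2 ≤ (ρ - a) * (b - ρ) := by
    rw [div_pow, div_le_iff₀ (by positivity)]
    exact norm_sub_smul_sq_le_of_re_inner_nonneg h hspec
  have hs : (‖u - (μ : ℂ) • w‖ / ‖w‖) ^ 2 =
      (μ - ρ) ^ 2 + (‖u - (ρ : ℂ) • w‖ / ‖w‖) ^ 2 := by
    rw [div_pow, div_pow, norm_sub_smul_sq_of_inner_eq h μ]
    field_simp
    ring
  obtain ⟨hle, hiff⟩ := abs_sub_sub_le_abs_sub_of_sq_eq hab hr (by positivity) hs hμ hd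
  refine ⟨hle, hiff.trans ?_⟩
  rw [div_eq_zero_iff, or_iff_left hw0.ne', norm_eq_zero, sub_eq_zero,
    exists_eq_smul_iff_of_inner_eq h hw]

end RayleighQuotient

open WithLp (toLp)

open scoped MatrixOrder in
theorem Matrix.PosDef.exists_isUnit_eq_conjTranspose_mul_self {ι : Type*} [Fintype ι]
    [DecidableEq ι] {P : Matrix ι ι ℂ} (hP : P.PosDef) :
    ∃ S : Matrix ι ι ℂ, IsUnit S ∧ P = Sᴴ * S := by
  obtain ⟨S, hS⟩ := CStarAlgebra.nonneg_iff_eq_star_mul_self.mp hP.posSemidef.nonneg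
  rw [star_eq_conjTranspose] at hS
  refine ⟨S, (isUnit_iff_isUnit_det _).mpr (isUnit_of_mul_isUnit_right (x := Sᴴ.det) ?_), hS⟩
  rw [← det_mul, ← hS]
  exact (isUnit_iff_isUnit_det P).mp hP.isUnit

theorem Matrix.IsHermitian.exists_isHermitian_mul_eq {ι : Type*} [Fintype ι] [DecidableEq ι]
    {M N P S : Matrix ι ι ℂ} (hsa : (Nᴴ * P * M).IsHermitian) (hPS : P = Sᴴ * S)
    (hSN : IsUnit (S * N)) : ∃ B : Matrix ι ι ℂ, B.IsHermitian ∧ B * (S * N) = S * M := by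
  -- this is `S * M * N⁻¹ * S⁻¹`, written as a congruence of `Nᴴ * P * M`
  refine ⟨((S * N)⁻¹)ᴴ * (Nᴴ * P * M) * (S * N)⁻¹,
    isHermitian_conjTranspose_mul_mul _ hsa, ?_⟩
  have hinv := mul_nonsing_inv _ ((isUnit_iff_isUnit_det _).mp hSN)
  have hfactor : Nᴴ * P * M = (S * N)ᴴ * (S * M) := by
    rw [hPS, conjTranspose_mul]; simp only [Matrix.mul_assoc]
  rw [Matrix.mul_assoc, nonsing_inv_mul _ ((isUnit_iff_isUnit_det _).mp hSN), Matrix.mul_one,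
    hfactor, ← Matrix.mul_assoc, ← conjTranspose_mul, hinv, conjTranspose_one, Matrix.one_mul]

theorem mem_genSpec_of_mem_spectrum {n : ℕ} {M N S B : Matrix (Fin n) (Fin n) ℂ}
    (hS : IsUnit S) (hB : B * (S * N) = S * M) {l : ℝ} (hl : l ∈ spectrum ℝ B) :
    (l : ℂ) ∈ genSpec M N := by
  rw [spectrum.mem_iff, Algebra.algebraMap_eq_smul_one, ← IsUnit.neg_iff, neg_sub,
    isUnit_iff_isUnit_det, isUnit_iff_ne_zero, not_not] at hl
  have hfactor : S * (M - (l : ℂ) • N) = (B - l • 1) * (S * N) := by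
    rw [Matrix.mul_sub, Matrix.sub_mul, hB, mul_smul_comm, smul_mul_assoc, Matrix.one_mul,
      Complex.coe_smul]
  have hdet := congrArg det hfactor
  rw [det_mul, det_mul, hl, zero_mul, mul_eq_zero] at hdet
  exact hdet.resolve_left ((isUnit_iff_isUnit_det S).mp hS).ne_zero

open scoped MatrixOrder in
theorem Matrix.IsHermitian.re_inner_sub_smul_nonneg {ι : Type*} [Fintype ι] [DecidableEq ι]
    {B : Matrix ι ι ℂ} (hB : B.IsHermitian) {a b : ℝ} (h : spectrum ℝ B ⊆ Set.Icc a b)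
    (v : ι → ℂ) :
    0 ≤ (⟪toLp 2 (B *ᵥ v) - (a : ℂ) • toLp 2 v, (b : ℂ) • toLp 2 v - toLp 2 (B *ᵥ v)⟫_ℂ).re := by
  have hpsd : 0 ≤ (B - algebraMap ℝ _ a) * (algebraMap ℝ _ b - B) := by
    have hcfc : cfc (fun x => (x - a) * (b - x)) B =
        (B - algebraMap ℝ _ a) * (algebraMap ℝ _ b - B) := by
      rw [cfc_mul (fun x => x - a) (fun x => b - x) B, cfc_sub _ _ B, cfc_sub _ _ B,
        cfc_id' ℝ B, cfc_const a B, cfc_const b B]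
    rw [← hcfc]
    exact cfc_nonneg fun x hx => mul_nonneg (sub_nonneg.2 (h hx).1) (sub_nonneg.2 (h hx).2)
  have hquad := (nonneg_iff_posSemidef.mp hpsd).dotProduct_mulVec_nonneg v
  have hBa : (B - a • (1 : Matrix ι ι ℂ)).IsHermitian :=
    hB.sub (isHermitian_one.smul (IsSelfAdjoint.all a))
  rw [Algebra.algebraMap_eq_smul_one, Algebra.algebraMap_eq_smul_one, ← mulVec_mulVec,
    dotProduct_mulVec, ← hBa.eq, ← star_mulVec, dotProduct_comm] at hquad
  have hX : toLp 2 (B *ᵥ v) - (a : ℂ) • toLp 2 v = toLp 2 ((B - a • 1) *ᵥ v) := by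
    simp [sub_mulVec, Complex.coe_smul, smul_mulVec]
  have hY : (b : ℂ) • toLp 2 v - toLp 2 (B *ᵥ v) = toLp 2 ((b • 1 - B) *ᵥ v) := by
    simp [sub_mulVec, Complex.coe_smul, smul_mulVec]
  rw [hX, hY, EuclideanSpace.inner_toLp_toLp]
  exact (Complex.nonneg_iff.mp hquad).1

theorem innerP_eq_inner {n : ℕ} {P S : Matrix (Fin n) (Fin n) ℂ} (hPS : P = Sᴴ * S)
    (x y : Fin n → ℂ) : innerP P x y = ⟪toLp 2 (S *ᵥ y), toLp 2 (S *ᵥ x)⟫_ℂ := by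
  rw [innerP, hPS, EuclideanSpace.inner_toLp_toLp, ← mulVec_mulVec, dotProduct_mulVec,
    ← star_mulVec, dotProduct_comm]

theorem normP_eq_norm {n : ℕ} {P S : Matrix (Fin n) (Fin n) ℂ} (hPS : P = Sᴴ * S)
    (x : Fin n → ℂ) : normP P x = ‖toLp 2 (S *ᵥ x)‖ := by
  rw [normP, innerP_eq_inner hPS, norm_eq_sqrt_re_inner (𝕜 := ℂ)]
  rfl

theorem im_innerP_eq_zero {n : ℕ} {M N P : Matrix (Fin n) (Fin n) ℂ}
    (hsa : (Nᴴ * P * M).IsHermitian) (x : Fin n → ℂ) :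
    (innerP P (M *ᵥ x) (N *ᵥ x)).im = 0 := by
  have : innerP P (M *ᵥ x) (N *ᵥ x) = star x ⬝ᵥ (Nᴴ * P * M) *ᵥ x := by
    rw [innerP, star_mulVec, ← dotProduct_mulVec, mulVec_mulVec, mulVec_mulVec,
      Matrix.mul_assoc]
  rw [this]
  exact hsa.im_star_dotProduct_mulVec_self x

section Whitening

variable {n : ℕ} {M N P S : Matrix (Fin n) (Fin n) ℂ} {x : Fin n → ℂ} {ρ : ℝ}

theorem rq_eq_of_inner_eq (hPS : P = Sᴴ * S)
    (hρ : ⟪toLp 2 (S *ᵥ N *ᵥ x), toLp 2 (S *ᵥ M *ᵥ x)⟫_ℂ = ρ * ‖toLp 2 (S *ᵥ N *ᵥ x)‖ ^ 2)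
    (hw : toLp 2 (S *ᵥ N *ᵥ x) ≠ 0) : rq M N P x = ρ := by
  have : ‖toLp 2 (S *ᵥ N *ᵥ x)‖ ≠ 0 := norm_ne_zero_iff.mpr hw
  rw [rq, innerP_eq_inner hPS, innerP_eq_inner hPS, hρ, inner_self_eq_norm_sq_complex]
  push_cast
  field_simp

theorem qf_eq_of_inner_eq (hPS : P = Sᴴ * S)
    (hρ : ⟪toLp 2 (S *ᵥ N *ᵥ x), toLp 2 (S *ᵥ M *ᵥ x)⟫_ℂ = ρ * ‖toLp 2 (S *ᵥ N *ᵥ x)‖ ^ 2)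
    (hw : toLp 2 (S *ᵥ N *ᵥ x) ≠ 0) {μ : ℝ} (hμ : ρ < μ) :
    qf M N P x μ = ((μ - ‖toLp 2 (S *ᵥ M *ᵥ x) - (μ : ℂ) • toLp 2 (S *ᵥ N *ᵥ x)‖ /
      ‖toLp 2 (S *ᵥ N *ᵥ x)‖ : ℝ) : ℂ) := by
  have hc : (ρ - μ) * ‖toLp 2 (S *ᵥ N *ᵥ x)‖ ^ 2 < 0 :=
    mul_neg_of_neg_of_pos (by linarith) (pow_pos (norm_pos_iff.mpr hw) 2)
  rw [qf, innerP_eq_inner hPS, normP_eq_norm hPS, normP_eq_norm hPS, sub_mulVec, mulVec_sub,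
    smul_mulVec, mulVec_smul, WithLp.toLp_sub, WithLp.toLp_smul,
    inner_sub_smul_of_inner_eq hρ μ, Complex.norm_real, Real.norm_eq_abs, abs_of_neg hc,
    Complex.ofReal_neg, div_neg, div_self (by exact_mod_cast hc.ne)]
  push_cast
  ring

theorem exists_mulVec_eq_smul_iff_of_isUnit (hS : IsUnit S) :
    (∃ l : ℂ, M *ᵥ x = l • N *ᵥ x) ↔
      ∃ l : ℂ, toLp 2 (S *ᵥ M *ᵥ x) = l • toLp 2 (S *ᵥ N *ᵥ x) :=
  exists_congr fun l => by
    rw [← WithLp.toLp_smul, (WithLp.toLp_injective 2).eq_iff, ← mulVec_smul S,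
      (mulVec_injective_iff_isUnit.mpr hS).eq_iff]

end Whitening

theorem stmt_8_general {n : ℕ} (M N P : Matrix (Fin n) (Fin n) ℂ)
    (hP : P.PosDef) (hsa : (Nᴴ * P * M).IsHermitian) (hN : IsUnit N)
    (lam1 lamn : ℝ)
    (hlam1 : IsLeast {l : ℝ | (l : ℂ) ∈ genSpec M N} lam1)
    (hlamn : IsGreatest {l : ℝ | (l : ℂ) ∈ genSpec M N} lamn)
    (x : Fin n → ℂ) (hx : x ≠ 0)
    (μ : ℝ) (hμ : (rq M N P x).re < μ) (hdist : |lamn - μ| ≤ |lam1 - μ|) :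
    ‖(lam1 : ℂ) - qf M N P x μ‖ ≤ ‖(lam1 : ℂ) - rq M N P x‖ ∧
    (‖(lam1 : ℂ) - qf M N P x μ‖ = ‖(lam1 : ℂ) - rq M N P x‖ ↔
      ∃ l : ℂ, M.mulVec x = l • N.mulVec x) := by
  obtain ⟨S, hS, hPS⟩ := hP.exists_isUnit_eq_conjTranspose_mul_self
  obtain ⟨B, hB, hBSN⟩ := hsa.exists_isHermitian_mul_eq hPS (hS.mul hN)
  have hw : toLp 2 (S *ᵥ N *ᵥ x) ≠ 0 := by
    simpa [mulVec_mulVec] using (mulVec_injective_iff_isUnit.mpr (hS.mul hN)).ne hx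
  obtain ⟨ρ, hρ⟩ := exists_inner_eq_mul_norm_sq
    (by rw [← innerP_eq_inner hPS]; exact im_innerP_eq_zero hsa x) hw
  have hspec : spectrum ℝ B ⊆ Set.Icc lam1 lamn := fun l hl =>
    ⟨hlam1.2 (mem_genSpec_of_mem_spectrum hS hBSN hl),
      hlamn.2 (mem_genSpec_of_mem_spectrum hS hBSN hl)⟩
  have hBv : B *ᵥ S *ᵥ N *ᵥ x = S *ᵥ M *ᵥ x := by simp only [mulVec_mulVec, ← hBSN]
  rw [rq_eq_of_inner_eq hPS hρ hw, Complex.ofReal_re] at hμ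
  rw [rq_eq_of_inner_eq hPS hρ hw, qf_eq_of_inner_eq hPS hρ hw hμ,
    exists_mulVec_eq_smul_iff_of_isUnit hS, ← Complex.ofReal_sub, ← Complex.ofReal_sub,
    Complex.norm_real, Complex.norm_real, Real.norm_eq_abs, Real.norm_eq_abs]
  exact abs_sub_sub_norm_div_le hρ hw (hlam1.2 hlamn.1)
    (hBv ▸ hB.re_inner_sub_smul_nonneg hspec (S *ᵥ N *ᵥ x)) hμ hdist

/-- for `μ` beyond the Rayleigh quotient and at least as far from `λ₁` as
from `λₙ`, the quotient beats the Rayleigh quotient as an estimate of `λ₁`, with equality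
iff `x` is an eigenvector. -/
theorem stmt_8 {n : ℕ} (hn : 1 ≤ n) (M N P : Matrix (Fin n) (Fin n) ℂ)
    (hP : P.PosDef) (hsa : (Nᴴ * P * M).IsHermitian) (hN : IsUnit N)
    (lam1 lamn : ℝ)
    (hlam1 : IsLeast {l : ℝ | (l : ℂ) ∈ genSpec M N} lam1)
    (hlamn : IsGreatest {l : ℝ | (l : ℂ) ∈ genSpec M N} lamn)
    (x : Fin n → ℂ) (hx : x ≠ 0)
    (μ : ℝ) (hμ : (rq M N P x).re < μ) (hdist : |lamn - μ| ≤ |lam1 - μ|) :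
    ‖(lam1 : ℂ) - qf M N P x μ‖ ≤ ‖(lam1 : ℂ) - rq M N P x‖ ∧
    (‖(lam1 : ℂ) - qf M N P x μ‖ = ‖(lam1 : ℂ) - rq M N P x‖ ↔
      ∃ l : ℂ, M.mulVec x = l • N.mulVec x) :=
  stmt_8_general M N P hP hsa hN lam1 lamn hlam1 hlamn x hx μ hμ hdist
end

section
/- Let M, N ∈ ℂ^{n×n} be such that N*M is Hermitian (equivalently, ⟨Mx,Nx⟩ ∈ ℝ for all x ∈ ℂ^n in the standard inner product) and ker M ∩ ker N = {0}. Then M − iN is invertible, the Cayley transform U = (M+iN)(M−iN)⁻¹ is unitary, and N(M−iN)⁻¹ = (1/(2i))(U − I); in particular N(M−iN)⁻¹ is a normal matrix. -/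
open Matrix Filter Topology
open scoped ComplexOrder

/-! Because `Nᴴ M` is Hermitian, the cross terms cancel in
`(M ± iN)ᴴ (M ± iN) = Mᴴ M + Nᴴ N`. The right-hand side is the Gram matrix of the stacked
matrix `[M; N]`, which is injective, so `M - iN` is invertible; and since `M + iN` and `M - iN`
have the same Gram matrix, `U = (M + iN)(M - iN)⁻¹` is unitary. Finally
`U - 1 = ((M + iN) - (M - iN))(M - iN)⁻¹ = 2i N (M - iN)⁻¹`, and `U - 1` is normal because the
unitary `U` is. -/

theorem isStarNormal_sub_one_of_mem_unitary {A : Type*} [Ring A] [StarRing A] {u : A}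
    (hu : u ∈ unitary A) : IsStarNormal (u - 1) :=
  haveI := isStarNormal_of_mem_unitary hu
  (star_one A ▸ Commute.one_right u).isStarNormal_sub

namespace Matrix

variable {n : Type*} [Fintype n] [DecidableEq n]

theorem isUnit_of_conjTranspose_mul_self_eq_add {R : Type*} [Field R] [PartialOrder R]
    [StarRing R] [StarOrderedRing R] {A M N : Matrix n n R} (hA : Aᴴ * A = Mᴴ * M + Nᴴ * N)
    (hker : ∀ x : n → R, M *ᵥ x = 0 → N *ᵥ x = 0 → x = 0) : IsUnit A := by
  rw [← mulVec_injective_iff_isUnit]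
  refine (injective_iff_map_eq_zero A.mulVecLin).mpr fun x hx => ?_
  rw [mulVecLin_apply] at hx
  have hstack : (fromRows M N)ᴴ * fromRows M N = Aᴴ * A := by
    rw [conjTranspose_fromRows_eq_fromCols_conjTranspose, fromCols_mul_fromRows, hA]
  have hMN : fromRows M N *ᵥ x = 0 := by
    rw [← conjTranspose_mul_self_mulVec_eq_zero, hstack, ← mulVec_mulVec]
    simp [hx]
  rw [fromRows_mulVec] at hMN
  exact hker x (funext fun i => congrFun hMN (.inl i)) (funext fun i => congrFun hMN (.inr i))

section CommRing

variable {R : Type*} [CommRing R] {A B : Matrix n n R}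

theorem mul_nonsing_inv_sub_one (hA : IsUnit A.det) : B * A⁻¹ - 1 = (B - A) * A⁻¹ := by
  rw [sub_mul, mul_nonsing_inv A hA]

theorem conjTranspose_mul_self_mul_nonsing_inv [StarRing R] (hA : IsUnit A.det)
    (h : Bᴴ * B = Aᴴ * A) : (B * A⁻¹)ᴴ * (B * A⁻¹) = 1 := by
  calc (B * A⁻¹)ᴴ * (B * A⁻¹) = A⁻¹ᴴ * (Bᴴ * B) * A⁻¹ := by
        rw [conjTranspose_mul]; noncomm_ring
    _ = (A * A⁻¹)ᴴ * (A * A⁻¹) := by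
        rw [h, conjTranspose_mul]; noncomm_ring
    _ = 1 := by simp [mul_nonsing_inv A hA]

end CommRing

theorem conjTranspose_mul_self_add_I_smul {M N : Matrix n n ℂ} (h : (Nᴴ * M).IsHermitian) :
    (M + Complex.I • N)ᴴ * (M + Complex.I • N) = Mᴴ * M + Nᴴ * N := by
  have hMN : Mᴴ * N = Nᴴ * M := by simpa only [IsHermitian, conjTranspose_mul,
    conjTranspose_conjTranspose] using h
  simp only [conjTranspose_add, conjTranspose_smul, Complex.star_def, Complex.conj_I, add_mul,
    mul_add, smul_mul_assoc, mul_smul_comm, hMN]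
  match_scalars <;> simp

theorem conjTranspose_mul_self_sub_I_smul {M N : Matrix n n ℂ} (h : (Nᴴ * M).IsHermitian) :
    (M - Complex.I • N)ᴴ * (M - Complex.I • N) = Mᴴ * M + Nᴴ * N := by
  have h' : ((-N)ᴴ * M).IsHermitian := by simpa [conjTranspose_neg] using h.neg
  simpa [sub_eq_add_neg] using conjTranspose_mul_self_add_I_smul h'

end Matrix

/-- if `N*M` is Hermitian and `ker M ∩ ker N = 0` then `M − iN` is
invertible, the Cayley transform `U = (M+iN)(M−iN)⁻¹` is unitary,
`N(M−iN)⁻¹ = (1/(2i))(U − I)`, and `N(M−iN)⁻¹` is normal. -/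
theorem stmt_16 {n : ℕ} (M N : Matrix (Fin n) (Fin n) ℂ)
    (hherm : (Nᴴ * M).IsHermitian)
    (hker : ∀ x : Fin n → ℂ, M.mulVec x = 0 → N.mulVec x = 0 → x = 0) :
    IsUnit (M - Complex.I • N) ∧
    ((M + Complex.I • N) * (M - Complex.I • N)⁻¹)ᴴ *
        ((M + Complex.I • N) * (M - Complex.I • N)⁻¹) = 1 ∧
    N * (M - Complex.I • N)⁻¹ =
      (1 / (2 * Complex.I)) • ((M + Complex.I • N) * (M - Complex.I • N)⁻¹ - 1) ∧
    (N * (M - Complex.I • N)⁻¹)ᴴ * (N * (M - Complex.I • N)⁻¹) =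
      (N * (M - Complex.I • N)⁻¹) * (N * (M - Complex.I • N)⁻¹)ᴴ := by
  have hgram := conjTranspose_mul_self_sub_I_smul hherm
  have hunit : IsUnit (M - Complex.I • N) := isUnit_of_conjTranspose_mul_self_eq_add hgram hker
  have hdet := (isUnit_iff_isUnit_det _).mp hunit
  have hunitary := conjTranspose_mul_self_mul_nonsing_inv hdet
    ((conjTranspose_mul_self_add_I_smul hherm).trans hgram.symm)
  have hcayley : N * (M - Complex.I • N)⁻¹ =
      (1 / (2 * Complex.I)) • ((M + Complex.I • N) * (M - Complex.I • N)⁻¹ - 1) := by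
    have hdiff : M + Complex.I • N - (M - Complex.I • N) = (2 * Complex.I) • N := by module
    rw [mul_nonsing_inv_sub_one hdet, hdiff, smul_mul_assoc, smul_smul,
      one_div_mul_cancel (by simp), one_smul]
  refine ⟨hunit, hunitary, hcayley, ?_⟩
  have hnormal := isStarNormal_sub_one_of_mem_unitary (mem_unitaryGroup_iff'.mpr hunitary)
  rw [hcayley]
  exact star_comm_self' _
end

section
/- Let M, N ∈ ℂ^{n×n} be such that N*M is Hermitian, ker M ∩ ker N = {0}, and N ≠ 0 (so that M − iN is invertible). Then, with ‖·‖ denoting the spectral (operator) norm and Euclidean vector norms, inf{‖Mx‖/‖Nx‖ : x ∈ ℂ^n, Nx ≠ 0} = √(1/‖N(M−iN)⁻¹‖² − 1). -/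
/-!
Because `Nᴴ * M` is Hermitian, `⟪Mx, Nx⟫` is real, so `T = M - i • N` satisfies
`‖Tx‖² = ‖Mx‖² + ‖Nx‖²`; in particular `T` is invertible. Then
`‖N T⁻¹‖ = max_x ‖Nx‖ / ‖Tx‖ = max_x ‖Nx‖ / √(‖Mx‖² + ‖Nx‖²)`, the maximum being attained on the
compact unit sphere, and `r ↦ √(1 / r² - 1)` turns this maximum into the minimum of `‖Mx‖ / ‖Nx‖`.
-/

open Matrix Filter Topology
open scoped ComplexOrder

open scoped Matrix.Norms.L2Operator

noncomputable def enorm' {n : ℕ} (x : Fin n → ℂ) : ℝ :=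
  Real.sqrt (star x ⬝ᵥ x).re

open WithLp

lemma enorm'_eq_norm_toLp {n : ℕ} (x : Fin n → ℂ) : enorm' x = ‖toLp 2 x‖ := by
  rw [enorm', norm_eq_sqrt_re_inner (𝕜 := ℂ), EuclideanSpace.inner_toLp_toLp, dotProduct_comm]
  rfl

lemma norm_sub_I_smul_sq {E : Type*} [NormedAddCommGroup E] [InnerProductSpace ℂ E] {u v : E}
    (h : (inner ℂ u v).im = 0) : ‖u - Complex.I • v‖ ^ 2 = ‖u‖ ^ 2 + ‖v‖ ^ 2 := by
  rw [norm_sub_sq (𝕜 := ℂ), inner_smul_right, norm_smul, Complex.norm_I, one_mul]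
  simp [h]

lemma im_inner_toLp_mulVec_eq_zero {ι : Type*} [Fintype ι] {M N : Matrix ι ι ℂ}
    (h : (Nᴴ * M).IsHermitian) (x : ι → ℂ) :
    (inner ℂ (toLp 2 (M *ᵥ x)) (toLp 2 (N *ᵥ x))).im = 0 := by
  have h' : (Mᴴ * N).IsHermitian := by
    simpa only [conjTranspose_mul, conjTranspose_conjTranspose] using h.conjTranspose
  rw [EuclideanSpace.inner_toLp_toLp, dotProduct_comm, star_mulVec, ← dotProduct_mulVec,
    mulVec_mulVec]
  exact h'.im_star_dotProduct_mulVec_self x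

lemma norm_toLp_sub_I_smul_mulVec_sq {ι : Type*} [Fintype ι] {M N : Matrix ι ι ℂ}
    (h : (Nᴴ * M).IsHermitian) (x : ι → ℂ) :
    ‖toLp 2 ((M - Complex.I • N) *ᵥ x)‖ ^ 2 = ‖toLp 2 (M *ᵥ x)‖ ^ 2 + ‖toLp 2 (N *ᵥ x)‖ ^ 2 := by
  rw [sub_mulVec, smul_mulVec, toLp_sub, toLp_smul]
  exact norm_sub_I_smul_sq (im_inner_toLp_mulVec_eq_zero h x)

lemma isUnit_det_sub_I_smul {ι : Type*} [Fintype ι] [DecidableEq ι] {M N : Matrix ι ι ℂ}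
    (h : (Nᴴ * M).IsHermitian) (hker : ∀ x, M *ᵥ x = 0 → N *ᵥ x = 0 → x = 0) :
    IsUnit (M - Complex.I • N).det := by
  refine isUnit_iff_ne_zero.2 fun hdet => ?_
  obtain ⟨v, hv, hTv⟩ := exists_mulVec_eq_zero_iff.2 hdet
  have hsum := norm_toLp_sub_I_smul_mulVec_sq h v
  rw [hTv, toLp_zero, norm_zero] at hsum
  have hMv : ‖toLp 2 (M *ᵥ v)‖ = 0 := by nlinarith [norm_nonneg (toLp 2 (M *ᵥ v))]
  have hNv : ‖toLp 2 (N *ᵥ v)‖ = 0 := by nlinarith [norm_nonneg (toLp 2 (N *ᵥ v))]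
  simp only [norm_eq_zero, toLp_eq_zero] at hMv hNv
  exact hv (hker v hMv hNv)

lemma ContinuousLinearMap.exists_norm_eq_one_norm_apply_eq_opNorm {𝕜 E F : Type*} [RCLike 𝕜]
    [NormedAddCommGroup E] [NormedSpace 𝕜 E] [ProperSpace E] [Nontrivial E]
    [SeminormedAddCommGroup F] [NormedSpace 𝕜 F] (f : E →L[𝕜] F) :
    ∃ x, ‖x‖ = 1 ∧ ‖f x‖ = ‖f‖ := by
  have : NormedSpace ℝ E := NormedSpace.restrictScalars ℝ 𝕜 E
  obtain ⟨x, hx, hmax⟩ := (isCompact_sphere (0 : E) 1).exists_isMaxOn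
    (NormedSpace.sphere_nonempty.2 zero_le_one) (continuous_norm.comp f.continuous).continuousOn
  rw [mem_sphere_zero_iff_norm] at hx
  exact ⟨x, hx, le_antisymm (f.le_opNorm_of_le hx.le |>.trans_eq (mul_one _))
    (f.opNorm_le_of_unit_norm (norm_nonneg _) fun y hy => hmax (mem_sphere_zero_iff_norm.2 hy))⟩

section
variable {ι : Type*} [Fintype ι] [DecidableEq ι] {T : Matrix ι ι ℂ}

lemma norm_toLp_mulVec_le_l2_opNorm_mul_inv (B : Matrix ι ι ℂ) (hT : IsUnit T.det) (x : ι → ℂ) :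
    ‖toLp 2 (B *ᵥ x)‖ ≤ ‖B * T⁻¹‖ * ‖toLp 2 (T *ᵥ x)‖ := by
  have h := (toEuclideanCLM (n := ι) (𝕜 := ℂ) (B * T⁻¹)).le_opNorm (toLp 2 (T *ᵥ x))
  rwa [toEuclideanCLM_toLp, mulVec_mulVec, nonsing_inv_mul_cancel_right T B hT,
    l2_opNorm_toEuclideanCLM] at h

lemma exists_norm_toLp_mulVec_eq_l2_opNorm_mul_inv [Nonempty ι] (B : Matrix ι ι ℂ)
    (hT : IsUnit T.det) :
    ∃ x, ‖toLp 2 (T *ᵥ x)‖ = 1 ∧ ‖toLp 2 (B *ᵥ x)‖ = ‖B * T⁻¹‖ := by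
  obtain ⟨y, hy, hBy⟩ :=
    (toEuclideanCLM (n := ι) (𝕜 := ℂ) (B * T⁻¹)).exists_norm_eq_one_norm_apply_eq_opNorm
  refine ⟨T⁻¹ *ᵥ ofLp y, ?_, ?_⟩
  · rwa [mulVec_mulVec, mul_nonsing_inv _ hT, one_mulVec]
  · rw [mulVec_mulVec]
    exact hBy

end

lemma sqrt_one_div_sq_sub_one_eq_div {a b : ℝ} (ha : 0 ≤ a) (hb : 0 < b) :
    √(1 / (b / √(a ^ 2 + b ^ 2)) ^ 2 - 1) = a / b := by
  have hs : √(a ^ 2 + b ^ 2) ^ 2 = a ^ 2 + b ^ 2 := Real.sq_sqrt (by positivity)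
  rw [div_pow, hs, show 1 / (b ^ 2 / (a ^ 2 + b ^ 2)) - 1 = (a / b) ^ 2 by field_simp; ring,
    Real.sqrt_sq (by positivity)]

lemma sqrt_one_div_sq_sub_one_le_div {a b c : ℝ} (ha : 0 ≤ a) (hb : 0 < b)
    (h : b ≤ c * √(a ^ 2 + b ^ 2)) : √(1 / c ^ 2 - 1) ≤ a / b := by
  have hs : 0 < √(a ^ 2 + b ^ 2) := by positivity
  have hc : b / √(a ^ 2 + b ^ 2) ≤ c := (div_le_iff₀ hs).2 h
  rw [← sqrt_one_div_sq_sub_one_eq_div ha hb]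
  gcongr

theorem stmt_17_general {n : ℕ} (M N : Matrix (Fin n) (Fin n) ℂ)
    (hherm : (Nᴴ * M).IsHermitian)
    (hker : ∀ x : Fin n → ℂ, M.mulVec x = 0 → N.mulVec x = 0 → x = 0)
    (hN : N ≠ 0) :
    sInf {r : ℝ | ∃ x : Fin n → ℂ, N.mulVec x ≠ 0 ∧
        r = enorm' (M.mulVec x) / enorm' (N.mulVec x)} =
      Real.sqrt (1 / ‖N * (M - Complex.I • N)⁻¹‖ ^ 2 - 1) := by
  set T := M - Complex.I • N
  have hT : IsUnit T.det := isUnit_det_sub_I_smul hherm hker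
  have hnorm_T (x : Fin n → ℂ) :
      ‖toLp 2 (T *ᵥ x)‖ = √(‖toLp 2 (M *ᵥ x)‖ ^ 2 + ‖toLp 2 (N *ᵥ x)‖ ^ 2) := by
    rw [← norm_toLp_sub_I_smul_mulVec_sq hherm, Real.sqrt_sq (norm_nonneg _)]
  have : Nonempty (Fin n) := let ⟨i, _⟩ := Function.ne_iff.1 hN; ⟨i⟩
  obtain ⟨x₀, hTx₀, hNx₀⟩ := exists_norm_toLp_mulVec_eq_l2_opNorm_mul_inv N hT
  have hNx₀_pos : 0 < ‖toLp 2 (N *ᵥ x₀)‖ := by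
    rw [hNx₀, norm_pos_iff]
    exact fun h => hN (by rw [← nonsing_inv_mul_cancel_right T N hT, h, zero_mul])
  simp only [enorm'_eq_norm_toLp]
  refine IsLeast.csInf_eq ⟨⟨x₀, fun h => ?_, ?_⟩, ?_⟩
  · simp [h] at hNx₀_pos
  · have hc : ‖N * T⁻¹‖ = ‖toLp 2 (N *ᵥ x₀)‖ / ‖toLp 2 (T *ᵥ x₀)‖ := by rw [hTx₀, div_one, hNx₀]
    rw [hc, hnorm_T, sqrt_one_div_sq_sub_one_eq_div (norm_nonneg _) hNx₀_pos]
  · rintro r ⟨x, hx, rfl⟩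
    refine sqrt_one_div_sq_sub_one_le_div (norm_nonneg _) (by simpa using hx) ?_
    exact hnorm_T x ▸ norm_toLp_mulVec_le_l2_opNorm_mul_inv N hT x

/-- `inf_{Nx ≠ 0} ‖Mx‖/‖Nx‖ = √(1/‖N(M−iN)⁻¹‖² − 1)` with the spectral
matrix norm and Euclidean vector norms. -/
theorem stmt_17 {n : ℕ} (hn : 1 ≤ n) (M N : Matrix (Fin n) (Fin n) ℂ)
    (hherm : (Nᴴ * M).IsHermitian)
    (hker : ∀ x : Fin n → ℂ, M.mulVec x = 0 → N.mulVec x = 0 → x = 0)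
    (hN : N ≠ 0) :
    sInf {r : ℝ | ∃ x : Fin n → ℂ, N.mulVec x ≠ 0 ∧
        r = enorm' (M.mulVec x) / enorm' (N.mulVec x)} =
      Real.sqrt (1 / ‖N * (M - Complex.I • N)⁻¹‖ ^ 2 - 1) :=
  stmt_17_general M N hherm hker hN
end

section
/- Assume the pencil (M,N) is self-adjoint with respect to P and N is invertible, so Λ(M,N) is a nonempty set of real numbers. Then for every μ ∈ ℝ and every x ∈ ℂ^n, (min{|λ − μ| : λ ∈ Λ(M,N)})·‖Nx‖_P ≤ ‖(M−μN)x‖_P ≤ (max{|λ − μ| : λ ∈ Λ(M,N)})·‖Nx‖_P. -/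
/-!
Factor `P = Lᴴ * L` with `L` invertible, so that `‖z‖_P = ‖L z‖`. For `C = L * N`, the matrix
`B = L * M * C⁻¹` is Hermitian, being congruent to `Cᴴ * (L * M) = Nᴴ * P * M`, and
`L * (M - λ • N) = (B - λ • 1) * C`. Hence `Λ(M, N)` is the spectrum of `B`, and for `y = C x` the
claim reads `min |λ - μ| * ‖y‖ ≤ ‖(B - μ • 1) y‖ ≤ max |λ - μ| * ‖y‖`, which is clear in an
orthonormal eigenbasis of `B`.
-/

open Matrix Filter Topology
open scoped ComplexOrder

lemma Matrix.PosDef.exists_eq_conjTranspose_mul_self {m 𝕜 : Type*} [Fintype m] [DecidableEq m]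
    [RCLike 𝕜] {P : Matrix m m 𝕜} (hP : P.PosDef) :
    ∃ L : Matrix m m 𝕜, IsUnit L.det ∧ P = Lᴴ * L := by
  open scoped MatrixOrder in
  obtain ⟨hLH, hLL⟩ : (CFC.sqrt P)ᴴ = CFC.sqrt P ∧ CFC.sqrt P * CFC.sqrt P = P :=
    ⟨(CFC.sqrt_nonneg P).posSemidef.1, CFC.sqrt_mul_sqrt_self P hP.posSemidef.nonneg⟩
  refine ⟨CFC.sqrt P, ?_, by rw [hLH, hLL]⟩
  have hdet : IsUnit (CFC.sqrt P * CFC.sqrt P).det := by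
    rw [hLL, ← isUnit_iff_isUnit_det]; exact hP.isUnit
  exact isUnit_of_mul_isUnit_left (by rwa [det_mul] at hdet)

section Pencil

variable {m 𝕜 : Type*} [Fintype m] [DecidableEq m]

lemma isHermitian_mul_nonsing_inv [CommRing 𝕜] [StarRing 𝕜] {K C : Matrix m m 𝕜}
    (hC : IsUnit C.det) (h : (Cᴴ * K).IsHermitian) : (K * C⁻¹).IsHermitian := by
  have hKC : K * C⁻¹ = C⁻¹ᴴ * (Cᴴ * K) * C⁻¹ := by
    rw [← mul_assoc, ← conjTranspose_mul, mul_nonsing_inv C hC, conjTranspose_one, one_mul]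
  rw [hKC]
  exact isHermitian_conjTranspose_mul_mul _ h

lemma sub_smul_eq_mul_nonsing_inv_sub_smul_one_mul [CommRing 𝕜] {K C : Matrix m m 𝕜}
    (hC : IsUnit C.det) (l : 𝕜) : K - l • C = (K * C⁻¹ - l • 1) * C := by
  rw [sub_mul, smul_mul, one_mul, mul_assoc, nonsing_inv_mul C hC, mul_one]

end Pencil

section GenSpec

variable {n : ℕ}

lemma genSpec_mul_left {L : Matrix (Fin n) (Fin n) ℂ} (hL : IsUnit L.det)
    (M N : Matrix (Fin n) (Fin n) ℂ) : genSpec (L * M) (L * N) = genSpec M N := by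
  ext l
  change (L * M - l • (L * N)).det = 0 ↔ (M - l • N).det = 0
  rw [← Matrix.mul_smul, ← mul_sub, det_mul, mul_eq_zero_iff_left hL.ne_zero]

lemma genSpec_eq_of_isUnit_det (K : Matrix (Fin n) (Fin n) ℂ) {C : Matrix (Fin n) (Fin n) ℂ}
    (hC : IsUnit C.det) : genSpec K C = {l | (K * C⁻¹ - l • 1).det = 0} := by
  ext l
  change (K - l • C).det = 0 ↔ (K * C⁻¹ - l • 1).det = 0
  rw [sub_smul_eq_mul_nonsing_inv_sub_smul_one_mul hC, det_mul,
    mul_eq_zero_iff_right hC.ne_zero]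

end GenSpec

lemma Matrix.IsHermitian.det_sub_smul_one_eq_zero_iff {m 𝕜 : Type*} [Fintype m] [DecidableEq m]
    [RCLike 𝕜] {B : Matrix m m 𝕜} (hB : B.IsHermitian) (l : ℝ) :
    (B - (l : 𝕜) • 1).det = 0 ↔ l ∈ Set.range hB.eigenvalues := by
  rw [← hB.spectrum_real_eq_range_eigenvalues, spectrum.mem_iff, ← not_iff_not, not_not,
    isUnit_iff_isUnit_det, isUnit_iff_ne_zero, ← neg_sub, det_neg]
  simp [Algebra.algebraMap_eq_smul_one]

section Norms

variable {n : ℕ}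

lemma innerP_conjTranspose_mul_self (L : Matrix (Fin n) (Fin n) ℂ) (z w : Fin n → ℂ) :
    innerP (Lᴴ * L) z w = innerP 1 (L *ᵥ z) (L *ᵥ w) := by
  rw [innerP, innerP, one_mulVec, ← mulVec_mulVec, dotProduct_mulVec, star_mulVec]

lemma normP_conjTranspose_mul_self (L : Matrix (Fin n) (Fin n) ℂ) (z : Fin n → ℂ) :
    normP (Lᴴ * L) z = normP 1 (L *ᵥ z) := by
  rw [normP, normP, innerP_conjTranspose_mul_self]

lemma normP_one_eq (v : Fin n → ℂ) : normP 1 v = √(∑ i, ‖v i‖ ^ 2) := by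
  simp only [normP, innerP, one_mulVec, dotProduct, Pi.star_apply, Complex.re_sum]
  congr 1
  refine Finset.sum_congr rfl fun i _ => ?_
  rw [Complex.star_def, ← Complex.normSq_eq_conj_mul_self, Complex.normSq_eq_norm_sq,
    Complex.ofReal_re]

lemma normP_one_unitary_mulVec {U : Matrix (Fin n) (Fin n) ℂ} (hU : U ∈ unitaryGroup (Fin n) ℂ)
    (v : Fin n → ℂ) : normP 1 (U *ᵥ v) = normP 1 v := by
  rw [← normP_conjTranspose_mul_self, ← star_eq_conjTranspose, mem_unitaryGroup_iff'.mp hU]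

lemma le_normP_one_mul {d : Fin n → ℂ} {c : ℝ} (hc0 : 0 ≤ c) (hc : ∀ i, c ≤ ‖d i‖)
    (w : Fin n → ℂ) : c * normP 1 w ≤ normP 1 (fun i => d i * w i) := by
  rw [normP_one_eq, normP_one_eq, ← Real.sqrt_sq hc0, ← Real.sqrt_mul (sq_nonneg c),
    Finset.mul_sum]
  gcongr with i
  rw [norm_mul, mul_pow]
  gcongr
  exact hc i

lemma normP_one_mul_le {d : Fin n → ℂ} {c : ℝ} (hc0 : 0 ≤ c) (hc : ∀ i, ‖d i‖ ≤ c)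
    (w : Fin n → ℂ) : normP 1 (fun i => d i * w i) ≤ c * normP 1 w := by
  rw [normP_one_eq, normP_one_eq, ← Real.sqrt_sq hc0, ← Real.sqrt_mul (sq_nonneg c),
    Finset.mul_sum]
  gcongr with i
  rw [norm_mul, mul_pow]
  gcongr
  exact hc i

end Norms

namespace Matrix.IsHermitian

variable {n : ℕ} {B : Matrix (Fin n) (Fin n) ℂ} (hB : B.IsHermitian)

lemma sub_smul_one_eq (μ : ℝ) :
    B - (μ : ℂ) • 1 = (hB.eigenvectorUnitary : Matrix (Fin n) (Fin n) ℂ) *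
      diagonal (fun i => ((hB.eigenvalues i - μ : ℝ) : ℂ)) * star hB.eigenvectorUnitary := by
  have hdiag : diagonal (fun i => ((hB.eigenvalues i - μ : ℝ) : ℂ)) =
      diagonal (RCLike.ofReal ∘ hB.eigenvalues) - (μ : ℂ) • 1 := by
    rw [← diagonal_one, ← diagonal_smul, diagonal_sub]
    congr 1
    ext i
    simp
  conv_lhs => rw [hB.spectral_theorem]
  rw [hdiag, mul_sub, sub_mul, Unitary.conjStarAlgAut_apply, mul_smul_comm, smul_mul_assoc,
    mul_one, Unitary.coe_mul_star_self, Unitary.coe_star]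

lemma exists_eigencoordinates_normP_one (μ : ℝ) (y : Fin n → ℂ) :
    ∃ w : Fin n → ℂ, normP 1 y = normP 1 w ∧
      normP 1 ((B - (μ : ℂ) • 1) *ᵥ y) =
        normP 1 (fun i => ((hB.eigenvalues i - μ : ℝ) : ℂ) * w i) := by
  refine ⟨(star hB.eigenvectorUnitary).1 *ᵥ y,
    (normP_one_unitary_mulVec (star hB.eigenvectorUnitary).2 y).symm, ?_⟩
  rw [hB.sub_smul_one_eq, ← mulVec_mulVec, ← mulVec_mulVec,
    normP_one_unitary_mulVec hB.eigenvectorUnitary.2]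
  exact congrArg (normP 1) (funext fun i => mulVec_diagonal _ _ i)

lemma le_normP_one_sub_smul_one_mulVec (μ : ℝ) {c : ℝ} (hc0 : 0 ≤ c)
    (hc : ∀ i, c ≤ |hB.eigenvalues i - μ|) (y : Fin n → ℂ) :
    c * normP 1 y ≤ normP 1 ((B - (μ : ℂ) • 1) *ᵥ y) := by
  obtain ⟨w, hy, hBy⟩ := hB.exists_eigencoordinates_normP_one μ y
  rw [hy, hBy]
  exact le_normP_one_mul hc0 (fun i => (hc i).trans_eq (Complex.norm_real _).symm) w

lemma normP_one_sub_smul_one_mulVec_le (μ : ℝ) {c : ℝ} (hc0 : 0 ≤ c)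
    (hc : ∀ i, |hB.eigenvalues i - μ| ≤ c) (y : Fin n → ℂ) :
    normP 1 ((B - (μ : ℂ) • 1) *ᵥ y) ≤ c * normP 1 y := by
  obtain ⟨w, hy, hBy⟩ := hB.exists_eigencoordinates_normP_one μ y
  rw [hy, hBy]
  exact normP_one_mul_le hc0 (fun i => (Complex.norm_real _).trans_le (hc i)) w

end Matrix.IsHermitian

theorem stmt_19_general {n : ℕ} (M N P : Matrix (Fin n) (Fin n) ℂ)
    (hP : P.PosDef) (hsa : (Nᴴ * P * M).IsHermitian) (hN : IsUnit N)
    (μ : ℝ) (x : Fin n → ℂ) :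
    sInf ((fun l : ℝ => |l - μ|) '' {l : ℝ | (l : ℂ) ∈ genSpec M N}) *
        normP P (N.mulVec x) ≤ normP P ((M - (μ : ℂ) • N).mulVec x) ∧
    normP P ((M - (μ : ℂ) • N).mulVec x) ≤
      sSup ((fun l : ℝ => |l - μ|) '' {l : ℝ | (l : ℂ) ∈ genSpec M N}) *
        normP P (N.mulVec x) := by
  obtain ⟨L, hL, rfl⟩ := hP.exists_eq_conjTranspose_mul_self
  have hC : IsUnit (L * N).det := by
    rw [det_mul]; exact hL.mul ((isUnit_iff_isUnit_det N).mp hN)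
  have hB : (L * M * (L * N)⁻¹).IsHermitian :=
    isHermitian_mul_nonsing_inv hC (by simpa only [conjTranspose_mul, mul_assoc] using hsa)
  have hspec : {l : ℝ | (l : ℂ) ∈ genSpec M N} = Set.range hB.eigenvalues := by
    ext l
    rw [← genSpec_mul_left hL, genSpec_eq_of_isUnit_det _ hC]
    exact hB.det_sub_smul_one_eq_zero_iff l
  have hMx : L *ᵥ ((M - (μ : ℂ) • N) *ᵥ x) =
      (L * M * (L * N)⁻¹ - (μ : ℂ) • 1) *ᵥ ((L * N) *ᵥ x) := by
    rw [mulVec_mulVec, mulVec_mulVec, ← sub_smul_eq_mul_nonsing_inv_sub_smul_one_mul hC,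
      mul_sub, Matrix.mul_smul]
  have hT : ((fun l : ℝ => |l - μ|) '' Set.range hB.eigenvalues).Finite :=
    (Set.finite_range _).image _
  rw [hspec, normP_conjTranspose_mul_self, normP_conjTranspose_mul_self, hMx, mulVec_mulVec]
  refine ⟨hB.le_normP_one_sub_smul_one_mulVec μ ?_ (fun i => ?_) _,
    hB.normP_one_sub_smul_one_mulVec_le μ ?_ (fun i => ?_) _⟩
  · exact Real.sInf_nonneg fun _ ⟨_, _, h⟩ => h ▸ abs_nonneg _
  · exact csInf_le hT.bddBelow ⟨_, ⟨i, rfl⟩, rfl⟩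
  · exact Real.sSup_nonneg fun _ ⟨_, _, h⟩ => h ▸ abs_nonneg _
  · exact le_csSup hT.bddAbove ⟨_, ⟨i, rfl⟩, rfl⟩

/-- two-sided bounds `min_λ |λ−μ|·‖Nx‖_P ≤ ‖(M−μN)x‖_P ≤ max_λ |λ−μ|·‖Nx‖_P`
for a self-adjoint pencil with invertible `N`. -/
theorem stmt_19 {n : ℕ} (hn : 1 ≤ n) (M N P : Matrix (Fin n) (Fin n) ℂ)
    (hP : P.PosDef) (hsa : (Nᴴ * P * M).IsHermitian) (hN : IsUnit N)
    (μ : ℝ) (x : Fin n → ℂ) :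
    sInf ((fun l : ℝ => |l - μ|) '' {l : ℝ | (l : ℂ) ∈ genSpec M N}) *
        normP P (N.mulVec x) ≤ normP P ((M - (μ : ℂ) • N).mulVec x) ∧
    normP P ((M - (μ : ℂ) • N).mulVec x) ≤
      sSup ((fun l : ℝ => |l - μ|) '' {l : ℝ | (l : ℂ) ∈ genSpec M N}) *
        normP P (N.mulVec x) :=
  stmt_19_general M N P hP hsa hN μ x
end
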